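/- arXiv:2412.00971 — 4 statements merged into one kernel-verified Lean document; each statement's English description precedes it below -/
import Mathlib

section
/- For every natural number n ≥ 4, the star arboricity of the complete graph K_n equals 1 + ⌈n/2⌉; that is, the minimum number of parts in a partition of the edge set of K_n such that every part spans a star forest is exactly 1 + ⌈n/2⌉. -/
/-- A simple graph is a *star forest* iff each of its connected components is a
star `K_{1,m}` (`m ≥ 0`); equivalently it is acyclic and contains no path with
three edges, which is captured by this local condition on walks of length 3. -/
def IsStarForest {V : Type*} (G : SimpleGraph V) : Prop :=
  ∀ a b c d : V, G.Adj a b → G.Adj b c → G.Adj c d → a = c ∨ b = d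

open Finset
namespace StarArb
variable {V : Type*} [DecidableEq V]

def deg (F : Finset (Sym2 V)) (v : V) : ℕ := #(F.filter (fun e => v ∈ e))

lemma handshake (F : Finset (Sym2 V)) (S : Finset V)
    (hmem : ∀ x y, s(x,y) ∈ F → x ≠ y ∧ x ∈ S ∧ y ∈ S) :
    ∑ v ∈ S, deg F v = 2 * F.card := by
  have key : ∀ e ∈ F, #(S.filter (fun v => v ∈ e)) = 2 := by
    intro e he
    induction e using Sym2.ind with
    | _ x y =>
      obtain ⟨hxy, hx, hy⟩ := hmem x y he
      have : S.filter (fun v => v ∈ s(x,y)) = {x, y} := by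
        ext v
        simp only [Finset.mem_filter, Sym2.mem_iff, Finset.mem_insert, Finset.mem_singleton]
        constructor
        · rintro ⟨_, h⟩; exact h
        · rintro (rfl | rfl) <;> simp [hx, hy]
      rw [this, Finset.card_insert_of_notMem (by simp [hxy]), Finset.card_singleton]
  calc ∑ v ∈ S, deg F v
      = ∑ v ∈ S, ∑ e ∈ F, if v ∈ e then 1 else 0 := by
        simp only [deg, Finset.card_filter]
    _ = ∑ e ∈ F, ∑ v ∈ S, if v ∈ e then 1 else 0 := Finset.sum_comm
    _ = ∑ e ∈ F, #(S.filter (fun v => v ∈ e)) := by simp only [Finset.card_filter]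
    _ = ∑ e ∈ F, 2 := Finset.sum_congr rfl key
    _ = 2 * F.card := by rw [Finset.sum_const, smul_eq_mul, mul_comm]

variable {F : Finset (Sym2 V)} {S : Finset V}

lemma exists_leaf
    (hstar : ∀ a b c d : V, s(a,b) ∈ F → s(b,c) ∈ F → s(c,d) ∈ F → a = c ∨ b = d)
    {x y : V} (he : s(x,y) ∈ F) : deg F x = 1 ∨ deg F y = 1 := by
  by_contra hcon
  push_neg at hcon
  obtain ⟨hnx, hny⟩ := hcon
  have hdx : 2 ≤ deg F x := by
    have h1 : 1 ≤ deg F x := Finset.card_pos.2 ⟨s(x,y), Finset.mem_filter.2 ⟨he, by simp⟩⟩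
    omega
  have hdy : 2 ≤ deg F y := by
    have h1 : 1 ≤ deg F y := Finset.card_pos.2 ⟨s(x,y), Finset.mem_filter.2 ⟨he, by simp⟩⟩
    omega
  have hgetx : ∀ v w : V, 2 ≤ deg F v → s(v,w) ∈ F → ∃ v', v' ≠ w ∧ s(v,v') ∈ F := by
    intro v w hd hvw
    obtain ⟨e₁, h₁, e₂, h₂, hne⟩ := Finset.one_lt_card.mp hd
    rcases eq_or_ne e₁ s(v,w) with rfl | hne1
    · obtain ⟨h₂F, h₂v⟩ := Finset.mem_filter.mp h₂
      obtain ⟨v', rfl⟩ := Sym2.mem_iff_exists.mp h₂v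
      exact ⟨v', fun h => hne.symm (by rw [h]), h₂F⟩
    · obtain ⟨h₁F, h₁v⟩ := Finset.mem_filter.mp h₁
      obtain ⟨v', rfl⟩ := Sym2.mem_iff_exists.mp h₁v
      exact ⟨v', fun h => hne1 (by rw [h]), h₁F⟩
  obtain ⟨x', hx'y, hx'⟩ := hgetx x y hdx he
  obtain ⟨y', hy'x, hy'⟩ := hgetx y x hdy (Sym2.eq_swap ▸ he)
  have h1 : s(x',x) ∈ F := Sym2.eq_swap ▸ hx'
  rcases hstar x' x y y' h1 he hy' with h | h
  · exact hx'y h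
  · exact hy'x h.symm

lemma card_le_leaves
    (hmem : ∀ x y, s(x,y) ∈ F → x ≠ y ∧ x ∈ S ∧ y ∈ S)
    (hstar : ∀ a b c d : V, s(a,b) ∈ F → s(b,c) ∈ F → s(c,d) ∈ F → a = c ∨ b = d) :
    F.card ≤ #(S.filter (fun v => deg F v = 1)) := by
  have key : ∀ e : Sym2 V, ∃ v, e ∈ F → (v ∈ e ∧ deg F v = 1 ∧ v ∈ S) := by
    intro e
    by_cases he : e ∈ F
    · induction e using Sym2.ind with
      | _ x y =>
        obtain ⟨hxy, hx, hy⟩ := hmem x y he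
        rcases exists_leaf hstar he with h | h
        · exact ⟨x, fun _ => ⟨by simp, h, hx⟩⟩
        · exact ⟨y, fun _ => ⟨by simp, h, hy⟩⟩
    · exact ⟨e.out.1, fun h => absurd h he⟩
  choose f hf using key
  apply Finset.card_le_card_of_injOn f
  · intro e heF
    obtain ⟨h1, h2, h3⟩ := hf e heF
    exact Finset.mem_filter.2 ⟨h3, h2⟩
  · intro e₁ h₁ e₂ h₂ hfe
    obtain ⟨m₁, d₁, _⟩ := hf e₁ h₁
    obtain ⟨m₂, d₂, _⟩ := hf e₂ h₂
    exact Finset.card_le_one.mp (le_of_eq d₁) _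
      (Finset.mem_filter.2 ⟨h₁, m₁⟩) _ (Finset.mem_filter.2 ⟨h₂, hfe ▸ m₂⟩)


lemma factA
    (hmem : ∀ x y, s(x,y) ∈ F → x ≠ y ∧ x ∈ S ∧ y ∈ S)
    (hstar : ∀ a b c d : V, s(a,b) ∈ F → s(b,c) ∈ F → s(c,d) ∈ F → a = c ∨ b = d) :
    F.card ≤ S.card - 1 := by
  classical
  set D := S.filter (fun v => deg F v = 1) with hD
  have hFD : F.card ≤ D.card := card_le_leaves hmem hstar
  have hDS : D ⊆ S := Finset.filter_subset _ _
  rcases lt_or_eq_of_le (Finset.card_le_card hDS) with hlt | heq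
  · omega
  · have hDeq : D = S := Finset.eq_of_subset_of_card_le hDS (le_of_eq heq.symm)
    have hsum := handshake F S hmem
    have hone : ∑ v ∈ S, deg F v = S.card := by
      rw [Finset.sum_congr rfl (fun v hv => (Finset.mem_filter.mp (hDeq ▸ hv : v ∈ D)).2)]
      simp
    omega

lemma factB
    (hmem : ∀ x y, s(x,y) ∈ F → x ≠ y ∧ x ∈ S ∧ y ∈ S)
    (hstar : ∀ a b c d : V, s(a,b) ∈ F → s(b,c) ∈ F → s(c,d) ∈ F → a = c ∨ b = d)
    (hcard : F.card + 1 = S.card) :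
    ∃ u ∈ S, ∀ v ∈ S, v ≠ u → s(u,v) ∈ F := by
  classical
  set D := S.filter (fun v => deg F v = 1) with hD
  have hFD : F.card ≤ D.card := card_le_leaves hmem hstar
  have hDS : D ⊆ S := Finset.filter_subset _ _
  have hsum := handshake F S hmem
  by_cases hDeq : D = S
  · have hone : ∑ v ∈ S, deg F v = S.card := by
      rw [Finset.sum_congr rfl (fun v hv => (Finset.mem_filter.mp (hDeq ▸ hv : v ∈ D)).2)]
      simp
    have hF1 : F.card = 1 := by omega
    have hS2 : S.card = 2 := by omega
    obtain ⟨e, heF⟩ := Finset.card_eq_one.mp hF1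
    induction e using Sym2.ind with
    | _ x y =>
      obtain ⟨hxy, hx, hy⟩ := hmem x y (by rw [heF]; exact Finset.mem_singleton_self _)
      have hsub : ({x, y} : Finset V) ⊆ S := by
        intro v hv
        rcases Finset.mem_insert.mp hv with rfl | hv
        · exact hx
        · exact (Finset.mem_singleton.mp hv) ▸ hy
      have hSeq : ({x, y} : Finset V) = S := by
        apply Finset.eq_of_subset_of_card_le hsub
        rw [Finset.card_insert_of_notMem (by simp [hxy]), Finset.card_singleton]
        omega
      refine ⟨x, hx, fun v hv hvx => ?_⟩
      have : v ∈ ({x, y} : Finset V) := hSeq ▸ hv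
      rcases Finset.mem_insert.mp this with rfl | hv'
      · exact absurd rfl hvx
      · rw [Finset.mem_singleton.mp hv', heF]; exact Finset.mem_singleton_self _
  · have hlt : D.card < S.card :=
      lt_of_le_of_ne (Finset.card_le_card hDS)
        (fun h => hDeq (Finset.eq_of_subset_of_card_le hDS (le_of_eq h.symm)))
    have hnsub : ¬ S ⊆ D := fun h => by
      have := Finset.card_le_card h; omega
    obtain ⟨u, huS, huD⟩ := Finset.not_subset.mp hnsub
    have hothers : ∀ v ∈ S, v ≠ u → deg F v = 1 := by
      intro v hv hvu
      by_contra hdv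
      have hvD : v ∉ D := fun h => hdv (Finset.mem_filter.mp h).2
      have hsub2 : D ⊆ (S.erase u).erase v := by
        intro w hw
        refine Finset.mem_erase.2 ⟨fun h => hvD (h ▸ hw), Finset.mem_erase.2
          ⟨fun h => huD (h ▸ hw), hDS hw⟩⟩
      have hc2 := Finset.card_le_card hsub2
      rw [Finset.card_erase_of_mem (Finset.mem_erase.2 ⟨hvu, hv⟩),
        Finset.card_erase_of_mem huS] at hc2
      have h2 : 2 ≤ S.card := by
        have hss : ({v, u} : Finset V) ⊆ S := by
          intro w hw
          rcases Finset.mem_insert.mp hw with rfl | hw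
          · exact hv
          · exact (Finset.mem_singleton.mp hw) ▸ huS
        have := Finset.card_le_card hss
        rw [Finset.card_insert_of_notMem (by simp [hvu]), Finset.card_singleton] at this
        omega
      omega
    have hsplit : deg F u + ∑ v ∈ S.erase u, deg F v = ∑ v ∈ S, deg F v :=
      Finset.add_sum_erase S _ huS
    have herased : ∑ v ∈ S.erase u, deg F v = S.card - 1 := by
      rw [Finset.sum_congr rfl (fun v hv => hothers v (Finset.mem_of_mem_erase hv)
        (Finset.ne_of_mem_erase hv))]
      simp [Finset.card_erase_of_mem huS]
    have hdegu : deg F u = S.card - 1 := by omega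
    refine ⟨u, huS, fun v hv hvu => ?_⟩
    by_contra hne
    have hS2 : 2 ≤ S.card := by
      have : ({v, u} : Finset V) ⊆ S := by
        intro w hw
        rcases Finset.mem_insert.mp hw with rfl | hw
        · exact hv
        · exact (Finset.mem_singleton.mp hw) ▸ huS
      have := Finset.card_le_card this
      rw [Finset.card_insert_of_notMem (by simp [hvu]), Finset.card_singleton] at this
      omega
    have key : ∀ e : Sym2 V, ∃ w, e ∈ F.filter (fun e => u ∈ e) → e = s(u, w) := by
      intro e
      by_cases h : e ∈ F.filter (fun e => u ∈ e)
      · obtain ⟨w, hw⟩ := Sym2.mem_iff_exists.mp (Finset.mem_filter.mp h).2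
        exact ⟨w, fun _ => hw⟩
      · exact ⟨u, fun h' => absurd h' h⟩
    choose g hg using key
    have hinj : deg F u ≤ #((S.erase u).erase v) := by
      apply Finset.card_le_card_of_injOn g
      · intro e he
        have heq := hg e he
        obtain ⟨heF, _⟩ := Finset.mem_filter.mp he
        have := hmem u (g e) (heq ▸ heF)
        refine Finset.mem_erase.2 ⟨fun h => hne ?_, Finset.mem_erase.2 ⟨Ne.symm this.1, this.2.2⟩⟩
        rw [h] at heq; exact heq ▸ heF
      · intro e₁ h₁ e₂ h₂ hge
        rw [hg e₁ h₁, hg e₂ h₂, hge]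
    rw [Finset.card_erase_of_mem (Finset.mem_erase.2 ⟨hvu, hv⟩),
      Finset.card_erase_of_mem huS] at hinj
    omega

end StarArb

/-- index of the part to which an edge of `K n` is assigned -/
def sfIdx (n : ℕ) : Sym2 (Fin n) → ℕ :=
  Sym2.lift ⟨fun a b =>
      if (a:ℕ)/2 = (b:ℕ)/2 then (n+1)/2
      else if (a:ℕ)%2 = (b:ℕ)%2 then min ((a:ℕ)/2) ((b:ℕ)/2)
      else max ((a:ℕ)/2) ((b:ℕ)/2),
    by intro a b; dsimp only; split_ifs <;> omega⟩

lemma sfIdx_mk {n : ℕ} (a b : Fin n) :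
    sfIdx n s(a,b) = if (a:ℕ)/2 = (b:ℕ)/2 then (n+1)/2
      else if (a:ℕ)%2 = (b:ℕ)%2 then min ((a:ℕ)/2) ((b:ℕ)/2)
      else max ((a:ℕ)/2) ((b:ℕ)/2) := rfl

lemma sfIdx_lt {n : ℕ} (e : Sym2 (Fin n)) : sfIdx n e < 1 + (n+1)/2 := by
  induction e using Sym2.ind with
  | _ a b =>
    have ha := a.isLt
    have hb := b.isLt
    rw [sfIdx_mk]
    split_ifs <;> omega


/-- Aoki; Lin–Shyu. For every `n ≥ 4`, the star arboricity of
the complete graph `K_n` — the least number of parts in a partition of the edge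
set of `K_n` such that every part spans a star forest — equals `1 + ⌈n/2⌉`. -/
theorem star_arboricity_of_complete_graph (n : ℕ) (hn : 4 ≤ n) :
    IsLeast {k : ℕ | ∃ P : Fin k → Set (Sym2 (Fin n)),
        (∀ i, P i ⊆ (⊤ : SimpleGraph (Fin n)).edgeSet) ∧
        (∀ e ∈ (⊤ : SimpleGraph (Fin n)).edgeSet, ∃! i, e ∈ P i) ∧
        (∀ i, IsStarForest (SimpleGraph.fromEdgeSet (P i)))}
      (1 + (n + 1) / 2) := by
  classical
  open Finset StarArb in
  constructor
  · -- membership : the explicit construction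
    refine ⟨fun i => {e | ¬ e.IsDiag ∧ sfIdx n e = i.val}, ?_, ?_, ?_⟩
    · intro i e he
      rw [SimpleGraph.edgeSet_top]
      exact he.1
    · intro e he
      rw [SimpleGraph.edgeSet_top] at he
      refine ⟨⟨sfIdx n e, sfIdx_lt e⟩, ⟨he, rfl⟩, fun j hj => Fin.ext hj.2.symm⟩
    · intro i a b c d hab hbc hcd
      rw [SimpleGraph.fromEdgeSet_adj] at hab hbc hcd
      obtain ⟨⟨hd1, he1⟩, hne1⟩ := hab
      obtain ⟨⟨hd2, he2⟩, hne2⟩ := hbc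
      obtain ⟨⟨hd3, he3⟩, hne3⟩ := hcd
      rw [sfIdx_mk] at he1 he2 he3
      have ha := a.isLt; have hb := b.isLt; have hc := c.isLt; have hd := d.isLt
      have h1 : (a:ℕ) ≠ b := fun h => hne1 (Fin.ext h)
      have h2 : (b:ℕ) ≠ c := fun h => hne2 (Fin.ext h)
      have h3 : (c:ℕ) ≠ d := fun h => hne3 (Fin.ext h)
      have key : (a:ℕ) = (c:ℕ) ∨ (b:ℕ) = (d:ℕ) := by
        split_ifs at he1 he2 he3 <;> omega
      exact key.imp (fun h => Fin.ext h) (fun h => Fin.ext h)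
  · -- lower bound
    rintro k ⟨P, hsub, huniq, hSF'⟩
    have hSF : ∀ i, ∀ a b c d : Fin n, (SimpleGraph.fromEdgeSet (P i)).Adj a b →
        (SimpleGraph.fromEdgeSet (P i)).Adj b c → (SimpleGraph.fromEdgeSet (P i)).Adj c d →
        a = c ∨ b = d := hSF'
    classical
    by_contra hklt
    push_neg at hklt
    have hk : k ≤ (n + 1) / 2 := by omega
    have hkpos : 0 < k := by
      rcases Nat.eq_zero_or_pos k with rfl | h
      · obtain ⟨i, -⟩ := huniq s((⟨0, by omega⟩ : Fin n), (⟨1, by omega⟩ : Fin n))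
          (by rw [SimpleGraph.edgeSet_top]
              exact fun h => absurd (Sym2.mk_isDiag_iff.mp h) (by simp [Fin.ext_iff]))
        exact absurd i.isLt (by omega)
      · exact h
    obtain ⟨Fi, hmemP'⟩ : ∃ Fi : Fin k → Finset (Sym2 (Fin n)), ∀ i e, e ∈ Fi i ↔ e ∈ P i :=
      ⟨fun i => (Set.toFinite (P i)).toFinset, fun i e => Set.Finite.mem_toFinset _⟩
    have hmemP : ∀ {i : Fin k} {e : Sym2 (Fin n)}, e ∈ Fi i ↔ e ∈ P i := fun {i e} => hmemP' i e
    have hP : ∀ {e : Sym2 (Fin n)} {i j : Fin k}, e ∈ Fi i → e ∈ Fi j → i = j := by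
      intro e i j hi hj
      exact (huniq e (hsub i (hmemP.mp hi))).unique (hmemP.mp hi) (hmemP.mp hj)
    have hmem_i : ∀ (i : Fin k) (x y : Fin n), s(x,y) ∈ Fi i →
        x ≠ y ∧ x ∈ (univ : Finset (Fin n)) ∧ y ∈ (univ : Finset (Fin n)) := by
      intro i x y h
      have h2 := hsub i (hmemP.mp h)
      rw [SimpleGraph.edgeSet_top] at h2
      exact ⟨fun hxy => h2 (Sym2.mk_isDiag_iff.mpr hxy), mem_univ _, mem_univ _⟩
    have hstar_i : ∀ (i : Fin k) (a b c d : Fin n), s(a,b) ∈ Fi i → s(b,c) ∈ Fi i →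
        s(c,d) ∈ Fi i → a = c ∨ b = d := by
      intro i a b c d h1 h2 h3
      exact hSF i a b c d
        ((SimpleGraph.fromEdgeSet_adj _).mpr ⟨hmemP.mp h1, (hmem_i i a b h1).1⟩)
        ((SimpleGraph.fromEdgeSet_adj _).mpr ⟨hmemP.mp h2, (hmem_i i b c h2).1⟩)
        ((SimpleGraph.fromEdgeSet_adj _).mpr ⟨hmemP.mp h3, (hmem_i i c d h3).1⟩)
    have hcardle : ∀ i, (Fi i).card ≤ n - 1 := by
      intro i
      have := factA (hmem_i i) (hstar_i i)
      rwa [Finset.card_univ, Fintype.card_fin] at this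
    have hfull : ∀ i, (Fi i).card = n - 1 → ∃ u : Fin n, ∀ v, v ≠ u → s(u,v) ∈ Fi i := by
      intro i hc
      obtain ⟨u, _, hu⟩ := factB (hmem_i i) (hstar_i i)
        (by rw [hc, Finset.card_univ, Fintype.card_fin]; omega)
      exact ⟨u, fun v hv => hu v (mem_univ v) hv⟩
    have hatmost : ∀ i j, (Fi i).card = n - 1 → (Fi j).card = n - 1 → i = j := by
      intro i j hi hj
      obtain ⟨u, hu⟩ := hfull i hi
      obtain ⟨w, hw⟩ := hfull j hj
      by_cases huw : u = w
      · subst huw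
        obtain ⟨v, hv⟩ : ∃ v : Fin n, v ≠ u := by
          rcases eq_or_ne u ⟨0, by omega⟩ with rfl | h
          · exact ⟨⟨1, by omega⟩, by simp [Fin.ext_iff]⟩
          · exact ⟨⟨0, by omega⟩, Ne.symm h⟩
        exact hP (hu v hv) (hw v hv)
      · have h1 := hu w (fun h => huw h.symm)
        have h2 := hw u huw
        exact hP h1 (by rwa [Sym2.eq_swap] at h2)
    -- counting
    have hdisj : ∀ i ∈ (univ : Finset (Fin k)), ∀ j ∈ univ, i ≠ j → Disjoint (Fi i) (Fi j) := by
      intro i _ j _ hij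
      exact Finset.disjoint_left.2 fun e hei hej => hij (hP hei hej)
    have hEq : (⊤ : SimpleGraph (Fin n)).edgeFinset = univ.biUnion Fi := by
      ext e
      rw [SimpleGraph.mem_edgeFinset]
      constructor
      · intro he
        obtain ⟨i, hi, _⟩ := huniq e he
        exact Finset.mem_biUnion.2 ⟨i, mem_univ _, hmemP.mpr hi⟩
      · intro he
        obtain ⟨i, _, hi⟩ := Finset.mem_biUnion.mp he
        exact hsub i (hmemP.mp hi)
    have hcount : ∑ i, (Fi i).card = n.choose 2 := by
      rw [← Finset.card_biUnion hdisj, ← hEq,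
        SimpleGraph.card_edgeFinset_top_eq_card_choose_two, Fintype.card_fin]
    have h2c : 2 * n.choose 2 = n * (n - 1) := by
      have hev : Even ((n - 1) * (n - 1 + 1)) := Nat.even_mul_succ_self (n - 1)
      rw [show n - 1 + 1 = n by omega] at hev
      have hdvd : 2 ∣ n * (n - 1) := by
        rw [mul_comm]; exact hev.two_dvd
      rw [Nat.choose_two_right, Nat.mul_div_cancel' hdvd]
    obtain ⟨N, rfl⟩ : ∃ N, n = N + 4 := ⟨n - 4, by omega⟩
    obtain ⟨K, rfl⟩ : ∃ K, k = K + 1 := ⟨k - 1, by omega⟩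
    rw [show N + 4 - 1 = N + 3 from rfl] at h2c hcardle
    simp only [show N + 4 - 1 = N + 3 from rfl] at hfull hatmost
    by_cases hex : ∃ i0, (Fi i0).card = N + 3
    · obtain ⟨i0, hi0⟩ := hex
      have hothers : ∀ j, j ≠ i0 → (Fi j).card ≤ N + 2 := by
        intro j hj
        have h1 := hcardle j
        have h2 : ¬((Fi j).card = N + 3) := fun h => hj (hatmost j i0 h hi0)
        omega
      have hsplit : (Fi i0).card + ∑ j ∈ univ.erase i0, (Fi j).card = ∑ i, (Fi i).card :=
        Finset.add_sum_erase univ (fun i => (Fi i).card) (mem_univ i0)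
      rcases (show 2 * (K + 1) ≤ N + 4 ∨ ((N + 4) % 2 = 1 ∧ 2 * (K + 1) = N + 5) by omega) with hpar | ⟨hodd, hkeq⟩
      · -- strict contradiction
        have hbound : ∑ j ∈ univ.erase i0, (Fi j).card ≤ (K) * (N + 2) := by
          calc ∑ j ∈ univ.erase i0, (Fi j).card ≤ ∑ j ∈ univ.erase i0, (N + 2) :=
                Finset.sum_le_sum fun j hj => hothers j (Finset.ne_of_mem_erase hj)
            _ = (K) * (N + 2) := by
                rw [Finset.sum_const, card_erase_of_mem (mem_univ _), card_univ,
                  Fintype.card_fin, smul_eq_mul, show K + 1 - 1 = K from rfl]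
        have htot : (N + 4).choose 2 ≤ (N + 3) + (K) * (N + 2) := by omega
        have h2tot : 2 * ((N + 3) + (K) * (N + 2)) = 2 * (N + 3) + (2 * K) * (N + 2) := by
          ring
        have hkk : 2 * K ≤ N + 2 := by omega
        have : (2 * K) * (N + 2) ≤ (N + 2) * (N + 2) := Nat.mul_le_mul_right _ hkk
        nlinarith [h2c, hcount]
      · -- n odd, k = (n+1)/2 : every other part has exactly N+2 edges
        obtain ⟨M, rfl⟩ : ∃ M, K = M + 2 := ⟨K - 2, by omega⟩
        have hexact : ∀ j, j ≠ i0 → (Fi j).card = N + 2 := by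
          intro j1 hj1
          by_contra hne
          have hle3 : (Fi j1).card ≤ N + 1 := by
            have := hothers j1 hj1; omega
          have hj1mem : j1 ∈ univ.erase i0 := Finset.mem_erase.2 ⟨hj1, mem_univ _⟩
          have hsplit2 : (Fi j1).card + ∑ j ∈ (univ.erase i0).erase j1, (Fi j).card
              = ∑ j ∈ univ.erase i0, (Fi j).card :=
            Finset.add_sum_erase _ (fun j => (Fi j).card) hj1mem
          have hbound2 : ∑ j ∈ (univ.erase i0).erase j1, (Fi j).card ≤ (M + 1) * (N + 2) := by
            calc ∑ j ∈ (univ.erase i0).erase j1, (Fi j).card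
                ≤ ∑ j ∈ (univ.erase i0).erase j1, (N + 2) :=
                  Finset.sum_le_sum fun j hj => hothers j
                    (Finset.ne_of_mem_erase (Finset.mem_of_mem_erase hj))
              _ = (M + 1) * (N + 2) := by
                  rw [Finset.sum_const, card_erase_of_mem hj1mem,
                    card_erase_of_mem (mem_univ _), card_univ, Fintype.card_fin, smul_eq_mul,
                    show M + 2 + 1 - 1 - 1 = M + 1 from rfl]
          have hkk : 2 * (M + 1) = N + 1 := by omega
          have h2b : 2 * ((M + 1) * (N + 2)) = (2 * (M + 1)) * (N + 2) := by ring
          nlinarith [h2c, hcount, hsplit, hsplit2]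
        obtain ⟨u, hu⟩ := hfull i0 hi0
        have huu : u ∈ (univ : Finset (Fin (N + 4))) := mem_univ u
        have hScard : ((univ : Finset (Fin (N + 4))).erase u).card = N + 3 := by
          rw [card_erase_of_mem huu, card_univ, Fintype.card_fin]; omega
        have havoid : ∀ j, j ≠ i0 → ∀ x y : Fin (N + 4), s(x,y) ∈ Fi j →
            x ≠ y ∧ x ∈ univ.erase u ∧ y ∈ univ.erase u := by
          intro j hj x y hxy
          have base := hmem_i j x y hxy
          have hxu : x ≠ u := by
            rintro rfl
            exact hj (hP hxy (hu y (Ne.symm base.1)))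
          have hyu : y ≠ u := by
            rintro rfl
            have h2 := hu x base.1
            rw [Sym2.eq_swap] at h2
            exact hj (hP hxy h2)
          exact ⟨base.1, Finset.mem_erase.2 ⟨hxu, mem_univ _⟩, Finset.mem_erase.2 ⟨hyu, mem_univ _⟩⟩
        have hcenter : ∀ j, j ≠ i0 → ∃ c : Fin (N + 4), c ≠ u ∧
            ∀ v, v ≠ u → v ≠ c → s(c,v) ∈ Fi j := by
          intro j hj
          obtain ⟨c, hcS, hc⟩ := factB (havoid j hj) (hstar_i j)
            (by rw [hexact j hj, hScard])
          exact ⟨c, (Finset.mem_erase.mp hcS).1,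
            fun v hvu hvc => hc v (Finset.mem_erase.2 ⟨hvu, mem_univ _⟩) hvc⟩
        have hk3 : 3 ≤ M + 2 + 1 := by omega
        obtain ⟨j1, hj1m, j2, hj2m, hj12⟩ := Finset.one_lt_card.mp
          (show 1 < (univ.erase i0).card by
            rw [card_erase_of_mem (mem_univ _), card_univ, Fintype.card_fin]; omega)
        have hj1 : j1 ≠ i0 := (Finset.mem_erase.mp hj1m).1
        have hj2 : j2 ≠ i0 := (Finset.mem_erase.mp hj2m).1
        obtain ⟨c1, hc1u, hc1⟩ := hcenter j1 hj1
        obtain ⟨c2, hc2u, hc2⟩ := hcenter j2 hj2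
        by_cases hcc : c1 = c2
        · obtain ⟨v, hvu, hvc⟩ : ∃ v : Fin (N + 4), v ≠ u ∧ v ≠ c1 := by
            have hc1mem : c1 ∈ (univ : Finset (Fin (N+4))).erase u :=
              Finset.mem_erase.2 ⟨hc1u, mem_univ _⟩
            have hpos : 0 < (((univ : Finset (Fin (N+4))).erase u).erase c1).card := by
              rw [card_erase_of_mem hc1mem, hScard]; omega
            obtain ⟨v, hv⟩ := Finset.card_pos.mp hpos
            obtain ⟨hvc, hv2⟩ := Finset.mem_erase.mp hv
            exact ⟨v, (Finset.mem_erase.mp hv2).1, hvc⟩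
          have h1 := hc1 v hvu hvc
          rw [hcc] at h1
          exact hj12 (hP h1 (hc2 v hvu (hcc ▸ hvc)))
        · have h1 := hc1 c2 hc2u (Ne.symm hcc)
          have h2 := hc2 c1 hc1u hcc
          rw [Sym2.eq_swap] at h2
          exact hj12 (hP h1 h2)
    · push_neg at hex
      have hall : ∀ i, (Fi i).card ≤ N + 2 := by
        intro i
        have h1 := hcardle i
        have h2 := hex i
        omega
      have hbound : ∑ i, (Fi i).card ≤ (K + 1) * (N + 2) := by
        calc ∑ i, (Fi i).card ≤ ∑ _i : Fin (K + 1), (N + 2) := Finset.sum_le_sum fun i _ => hall i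
          _ = (K + 1) * (N + 2) := by rw [Finset.sum_const, card_univ, Fintype.card_fin, smul_eq_mul]
      have hkk : 2 * (K + 1) ≤ N + 5 := by omega
      have h2b : 2 * ((K + 1) * (N + 2)) = (2 * (K + 1)) * (N + 2) := by ring
      have : (2 * (K + 1)) * (N + 2) ≤ (N + 5) * (N + 2) := Nat.mul_le_mul_right _ hkk
      nlinarith [h2c, hcount]
end

section
/- For every n ≥ 4, any partition of the edge set of the complete graph K_n into sets each of which spans a star forest has at least 1 + ⌈n/2⌉ parts. -/
open Finset

lemma key_star_forest (m s : ℕ) (R : Fin s → Fin (m + 4) → Fin (m + 4) → Prop)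
    (hsymm : ∀ i a b, R i a b → R i b a)
    (hne : ∀ i a b, R i a b → a ≠ b)
    (huniq : ∀ a b : Fin (m + 4), a ≠ b → ∃! i, R i a b)
    (hstar : ∀ i (a b c d : Fin (m + 4)), R i a b → R i b c → R i c d → a = c ∨ b = d) :
    1 + (m + 4 + 1) / 2 ≤ s := by
  classical
  by_contra hcon
  push_neg at hcon
  have hs : s ≤ (m + 5) / 2 := by omega
  set N : Fin s → Fin (m + 4) → Finset (Fin (m + 4)) :=
    fun i v => univ.filter (fun w => R i v w) with hNdef
  set d : Fin s → Fin (m + 4) → ℕ := fun i v => (N i v).card with hddef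
  have hd : ∀ i v, d i v = (N i v).card := fun _ _ => rfl
  have hmemN : ∀ i v w, w ∈ N i v ↔ R i v w := by
    intro i v w; simp [hNdef]
  -- unique part containing each edge
  have hone : ∀ v w : Fin (m + 4), v ≠ w → (univ.filter (fun i => R i v w)).card = 1 := by
    intro v w hvw
    obtain ⟨i₀, hi₀, hu⟩ := huniq v w hvw
    rw [Finset.card_eq_one]
    refine ⟨i₀, ?_⟩
    ext j
    simp only [mem_filter, mem_univ, true_and, mem_singleton]
    exact ⟨fun h => hu j h, fun h => h ▸ hi₀⟩
  -- total degree of each vertex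
  have hdeg : ∀ v : Fin (m + 4), ∑ i, d i v = m + 3 := by
    intro v
    have e1 : ∑ i, d i v = ∑ i, ∑ w : Fin (m + 4), if R i v w then 1 else 0 := by
      refine Finset.sum_congr rfl fun i _ => ?_
      rw [hd, hNdef, Finset.card_filter]
    rw [e1, Finset.sum_comm]
    have h2 : ∀ w : Fin (m + 4), (∑ i, if R i v w then (1:ℕ) else 0) = if w = v then 0 else 1 := by
      intro w
      by_cases hw : w = v
      · subst hw
        rw [if_pos rfl]
        refine Finset.sum_eq_zero fun i _ => ?_
        simp only [ite_eq_right_iff]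
        intro h; exact absurd rfl (hne _ _ _ h)
      · rw [if_neg hw, ← Finset.card_filter, hone v w (fun h => hw h.symm)]
    rw [Finset.sum_congr rfl fun w _ => h2 w]
    rw [← Finset.add_sum_erase _ _ (mem_univ v), if_pos rfl, zero_add]
    rw [Finset.sum_congr rfl fun w hw => if_neg (Finset.ne_of_mem_erase hw)]
    rw [Finset.sum_const, smul_eq_mul, mul_one, Finset.card_erase_of_mem (mem_univ v),
      Finset.card_univ, Fintype.card_fin]
    omega
  -- adjacent vertices cannot both be centers
  have hnot2 : ∀ i v w, R i v w → 2 ≤ d i v → 2 ≤ d i w → False := by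
    intro i v w hvw h2v h2w
    rw [hd] at h2v h2w
    obtain ⟨u, hu, huw⟩ := Finset.exists_mem_ne (by omega : 1 < (N i v).card) w
    obtain ⟨x, hx, hxv⟩ := Finset.exists_mem_ne (by omega : 1 < (N i w).card) v
    rcases hstar i u v w x (hsymm _ _ _ ((hmemN i v u).1 hu)) hvw ((hmemN i w x).1 hx) with h | h
    exacts [huw h, hxv h.symm]
  -- neighbors of centers are leaves
  have hleaf : ∀ i v w, 2 ≤ d i v → w ∈ N i v → d i w = 1 := by
    intro i v w h2 hw
    have hvw : R i v w := (hmemN i v w).1 hw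
    have h1le : 1 ≤ d i w := by
      rw [hd]; exact Finset.card_pos.2 ⟨v, (hmemN i w v).2 (hsymm _ _ _ hvw)⟩
    have hnot : ¬ 2 ≤ d i w := fun h => hnot2 i v w hvw h2 h
    omega
  -- leaf count dominates ∑ of center degrees
  have hSL : ∀ i, ∑ v ∈ univ.filter (fun v => 2 ≤ d i v), d i v
      ≤ (univ.filter (fun v => d i v = 1)).card := by
    intro i
    have hdis : ∀ v ∈ univ.filter (fun v => 2 ≤ d i v), ∀ v' ∈ univ.filter (fun v => 2 ≤ d i v),
        v ≠ v' → Disjoint (N i v) (N i v') := by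
      intro v hv v' hv' hvv'
      simp only [mem_filter, mem_univ, true_and] at hv hv'
      rw [Finset.disjoint_left]
      intro w hw hw'
      have h2v := hv
      rw [hd] at h2v
      obtain ⟨u, hu, huw⟩ := Finset.exists_mem_ne (by omega : 1 < (N i v).card) w
      rcases hstar i u v w v' (hsymm _ _ _ ((hmemN i v u).1 hu)) ((hmemN i v w).1 hw)
        (hsymm _ _ _ ((hmemN i v' w).1 hw')) with h | h
      exacts [huw h, hvv' h]
    have hcard : ∑ v ∈ univ.filter (fun v => 2 ≤ d i v), d i v
        = ((univ.filter (fun v => 2 ≤ d i v)).biUnion (fun v => N i v)).card := by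
      rw [Finset.card_biUnion hdis]
    rw [hcard]
    apply Finset.card_le_card
    intro w hw
    simp only [Finset.mem_biUnion] at hw
    obtain ⟨v, hv, hw⟩ := hw
    simp only [mem_filter, mem_univ, true_and] at hv ⊢
    exact hleaf i v w hv hw
  -- degree sum decomposition
  have hDsum : ∀ i, ∑ v, d i v = (univ.filter (fun v => d i v = 1)).card
      + ∑ v ∈ univ.filter (fun v => 2 ≤ d i v), d i v := by
    intro i
    rw [← Finset.sum_filter_add_sum_filter_not univ (fun v => 2 ≤ d i v) (d i)]
    rw [add_comm]
    congr 1
    have e1 : ∑ v ∈ univ.filter (fun v => ¬ 2 ≤ d i v), d i v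
        = ∑ v ∈ univ.filter (fun v => ¬ 2 ≤ d i v), (if d i v = 1 then 1 else 0) := by
      refine Finset.sum_congr rfl fun v hv => ?_
      simp only [mem_filter, mem_univ, true_and] at hv
      by_cases h1 : d i v = 1
      · rw [if_pos h1, h1]
      · rw [if_neg h1]; omega
    rw [e1, ← Finset.card_filter, Finset.filter_filter]
    congr 1
    ext v
    simp only [mem_filter, mem_univ, true_and]
    omega
  -- vertex-count decomposition
  have hILC : ∀ i, (univ.filter (fun v => d i v = 0)).card
      + (univ.filter (fun v => d i v = 1)).card
      + (univ.filter (fun v => 2 ≤ d i v)).card = m + 4 := by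
    intro i
    have h0 : ∀ v : Fin (m + 4), ((if d i v = 0 then (1:ℕ) else 0)
        + (if d i v = 1 then 1 else 0)) + (if 2 ≤ d i v then 1 else 0) = 1 := by
      intro v; split_ifs <;> omega
    have e1 : ∑ v : Fin (m + 4), (((if d i v = 0 then (1:ℕ) else 0)
        + (if d i v = 1 then 1 else 0)) + (if 2 ≤ d i v then 1 else 0)) = m + 4 := by
      rw [Finset.sum_congr rfl fun v _ => h0 v]
      simp
    rw [Finset.sum_add_distrib, Finset.sum_add_distrib, ← Finset.card_filter,
      ← Finset.card_filter, ← Finset.card_filter] at e1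
    exact e1
  -- key per-forest inequality
  have hkey : ∀ i, ∑ v, d i v + 2 * (univ.filter (fun v => 2 ≤ d i v)).card ≤ 2 * (m + 4) := by
    intro i
    have h5 := hSL i
    have h6 := hDsum i
    have h7 := hILC i
    omega
  -- total degree
  have htot : ∑ i, ∑ v, d i v = (m + 4) * (m + 3) := by
    rw [Finset.sum_comm, Finset.sum_congr rfl fun v _ => hdeg v]
    simp [Finset.sum_const, Finset.card_univ, mul_comm]
  -- center double-count
  have hCc : ∑ i, (univ.filter (fun v => 2 ≤ d i v)).card
      = ∑ v, (univ.filter (fun i => 2 ≤ d i v)).card := by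
    simp only [Finset.card_filter]
    rw [Finset.sum_comm]
  -- each vertex is a center somewhere
  have hc1 : ∀ v, 1 ≤ (univ.filter (fun i => 2 ≤ d i v)).card := by
    intro v
    by_contra h
    push_neg at h
    have hempty : univ.filter (fun i => 2 ≤ d i v) = ∅ := by
      have := Nat.lt_one_iff.mp h
      exact Finset.card_eq_zero.mp this
    have h0 : ∀ i, d i v ≤ 1 := by
      intro i
      by_contra h2
      push_neg at h2
      have : i ∈ univ.filter (fun i => 2 ≤ d i v) := by
        simp only [mem_filter, mem_univ, true_and]; omega
      rw [hempty] at this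
      exact absurd this (Finset.notMem_empty i)
    have hle : ∑ i, d i v ≤ ∑ i : Fin s, 1 := Finset.sum_le_sum fun i _ => h0 i
    rw [hdeg v] at hle
    simp only [Finset.sum_const, Finset.card_univ, Fintype.card_fin, smul_eq_mul, mul_one] at hle
    omega
  -- global inequality
  have hsum : ∑ i, (∑ v, d i v + 2 * (univ.filter (fun v => 2 ≤ d i v)).card)
      ≤ ∑ _i : Fin s, 2 * (m + 4) := Finset.sum_le_sum fun i _ => hkey i
  rw [Finset.sum_add_distrib, htot, ← Finset.mul_sum, hCc] at hsum
  simp only [Finset.sum_const, Finset.card_univ, Fintype.card_fin, smul_eq_mul] at hsum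
  have hcv : m + 4 ≤ ∑ v, (univ.filter (fun i => 2 ≤ d i v)).card := by
    calc m + 4 = ∑ _v : Fin (m + 4), 1 := by simp
    _ ≤ _ := Finset.sum_le_sum fun v _ => hc1 v
  -- derive n + 1 ≤ 2 s
  have hmul : (m + 4) * (m + 5) ≤ (m + 4) * (2 * s) := by nlinarith [hcv, hsum]
  have h2s : m + 5 ≤ 2 * s := Nat.le_of_mul_le_mul_left hmul (by omega)
  -- even case done; odd case
  rcases Nat.even_or_odd m with ⟨t, ht⟩ | ⟨t, ht⟩
  · omega
  subst ht
  have hseq : s = t + 3 := by omega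
  subst hseq
  -- equality analysis for odd n = 2t+5, s = t+3
  have hfeq : ∀ i, ∑ v, d i v + 2 * (univ.filter (fun v => 2 ≤ d i v)).card
      = 2 * (2 * t + 1 + 4) := by
    by_contra hne'
    push_neg at hne'
    obtain ⟨i, hi⟩ := hne'
    have hlt' : ∑ v, d i v + 2 * (univ.filter (fun v => 2 ≤ d i v)).card
        < 2 * (2 * t + 1 + 4) := lt_of_le_of_ne (hkey i) hi
    have hlt2 : ∑ j, (∑ v, d j v + 2 * (univ.filter (fun v => 2 ≤ d j v)).card)
        < ∑ _j : Fin (t + 3), 2 * (2 * t + 1 + 4) :=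
      Finset.sum_lt_sum (fun j _ => hkey j) ⟨i, mem_univ i, hlt'⟩
    rw [Finset.sum_add_distrib, htot, ← Finset.mul_sum, hCc] at hlt2
    simp only [Finset.sum_const, Finset.card_univ, Fintype.card_fin, smul_eq_mul] at hlt2
    nlinarith [hcv, hlt2]
  have hstruct : ∀ i, (univ.filter (fun v => d i v = 0)).card = 0
      ∧ ∑ v ∈ univ.filter (fun v => 2 ≤ d i v), d i v
          = (univ.filter (fun v => d i v = 1)).card
      ∧ (univ.filter (fun v => d i v = 1)).card
          + (univ.filter (fun v => 2 ≤ d i v)).card = 2 * t + 1 + 4 := by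
    intro i
    have h5 := hSL i
    have h6 := hDsum i
    have h7 := hILC i
    have h8 := hfeq i
    omega
  -- every vertex is a center exactly once
  have hcup : ∀ v : Fin (2 * t + 1 + 4), (univ.filter (fun i => 2 ≤ d i v)).card = 1 := by
    have hup : ∑ v : Fin (2 * t + 1 + 4), (univ.filter (fun i => 2 ≤ d i v)).card
        ≤ 2 * t + 5 := by nlinarith [hsum]
    intro v
    have h2 := hc1 v
    by_contra hx
    have h2' : 2 ≤ (univ.filter (fun i => 2 ≤ d i v)).card := by omega
    have hsplit := Finset.add_sum_erase univ
      (fun v => (univ.filter (fun i => 2 ≤ d i v)).card) (mem_univ v)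
    beta_reduce at hsplit
    have hge : (univ.erase v).card
        ≤ ∑ x ∈ univ.erase v, (univ.filter (fun i => 2 ≤ d i x)).card := by
      calc (univ.erase v).card = ∑ _x ∈ univ.erase v, 1 := by simp
      _ ≤ _ := Finset.sum_le_sum fun x _ => hc1 x
    rw [Finset.card_erase_of_mem (mem_univ v), Finset.card_univ, Fintype.card_fin] at hge
    omega
  -- all degrees positive
  have hpos : ∀ i v, 1 ≤ d i v := by
    intro i v
    rcases Nat.eq_zero_or_pos (d i v) with h0 | h
    · exfalso
      have hm : v ∈ univ.filter (fun v => d i v = 0) := by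
        simp only [mem_filter, mem_univ, true_and]; exact h0
      have hz := (hstruct i).1
      rw [Finset.card_eq_zero] at hz
      rw [hz] at hm
      exact absurd hm (Finset.notMem_empty v)
    · exact h
  -- center degrees are exactly t + 2
  have hcdeg : ∀ i v, 2 ≤ d i v → d i v = t + 2 := by
    intro i v h2
    obtain ⟨a, ha⟩ := Finset.card_eq_one.mp (hcup v)
    have hi : i ∈ univ.filter (fun j => 2 ≤ d j v) := by
      simp only [mem_filter, mem_univ, true_and]; exact h2
    rw [ha, Finset.mem_singleton] at hi
    have hothers : ∀ j, j ≠ i → d j v = 1 := by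
      intro j hji
      have hj : j ∉ univ.filter (fun j => 2 ≤ d j v) := by
        rw [ha, Finset.mem_singleton]; exact fun h => hji (h.trans hi.symm)
      simp only [mem_filter, mem_univ, true_and, not_le] at hj
      have := hpos j v
      omega
    have hsplit := Finset.add_sum_erase univ (fun j => d j v) (mem_univ i)
    beta_reduce at hsplit
    have hsum1 : ∑ j ∈ univ.erase i, d j v = (univ.erase i).card := by
      rw [Finset.sum_congr rfl fun j hj => hothers j (Finset.ne_of_mem_erase hj)]
      simp
    rw [Finset.card_erase_of_mem (mem_univ i), Finset.card_univ, Fintype.card_fin] at hsum1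
    have hdv := hdeg v
    omega
  -- final contradiction with any part i0
  have i0 : Fin (t + 3) := ⟨0, by omega⟩
  have hSc' : ∑ v ∈ univ.filter (fun v => 2 ≤ d i0 v), d i0 v
      = (univ.filter (fun v => 2 ≤ d i0 v)).card * (t + 2) := by
    rw [Finset.sum_congr rfl fun v hv => hcdeg i0 v
      (by simpa only [mem_filter, mem_univ, true_and] using hv)]
    rw [Finset.sum_const, smul_eq_mul]
  obtain ⟨hI, hSLeq, hLC⟩ := hstruct i0
  rw [hSc'] at hSLeq
  rcases Nat.lt_or_ge (univ.filter (fun v => 2 ≤ d i0 v)).card 2 with hC | hC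
  · have h01 : (univ.filter (fun v => 2 ≤ d i0 v)).card = 0
        ∨ (univ.filter (fun v => 2 ≤ d i0 v)).card = 1 := by omega
    rcases h01 with h | h <;> rw [h] at hSLeq hLC <;> omega
  · have hmm := Nat.mul_le_mul_right (t + 2) hC
    rw [hSLeq] at hmm
    omega

/-- For every `n ≥ 4`, any partition of the edge set of the
complete graph `K_n` into sets each of which spans a star forest has at least
`1 + ⌈n/2⌉` parts. -/
theorem star_forest_partition_of_complete_graph_lower (n s : ℕ) (hn : 4 ≤ n)
    (P : Fin s → Set (Sym2 (Fin n)))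
    (hsub : ∀ i, P i ⊆ (⊤ : SimpleGraph (Fin n)).edgeSet)
    (hpart : ∀ e ∈ (⊤ : SimpleGraph (Fin n)).edgeSet, ∃! i, e ∈ P i)
    (hsf : ∀ i, IsStarForest (SimpleGraph.fromEdgeSet (P i))) :
    1 + (n + 1) / 2 ≤ s := by
  obtain ⟨m, rfl⟩ : ∃ m, n = m + 4 := ⟨n - 4, by omega⟩
  have hne : ∀ (i : Fin s) (a b : Fin (m + 4)), s(a, b) ∈ P i → a ≠ b := by
    intro i a b h
    have h2 := hsub i h
    rw [SimpleGraph.mem_edgeSet, SimpleGraph.top_adj] at h2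
    exact h2
  apply key_star_forest m s (fun i a b => s(a, b) ∈ P i)
  · intro i a b h
    rwa [Sym2.eq_swap] at h
  · exact hne
  · intro a b hab
    exact hpart s(a, b) (by rw [SimpleGraph.mem_edgeSet, SimpleGraph.top_adj]; exact hab)
  · intro i a b c d hab hbc hcd
    exact hsf i a b c d
      (by rw [SimpleGraph.fromEdgeSet_adj]; exact ⟨hab, hne i a b hab⟩)
      (by rw [SimpleGraph.fromEdgeSet_adj]; exact ⟨hbc, hne i b c hbc⟩)
      (by rw [SimpleGraph.fromEdgeSet_adj]; exact ⟨hcd, hne i c d hcd⟩)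
end

section
/- Let r ≥ 2 and identify the vertices of K_{2r} with Fin (2r), placed in this circular order on a circle. Then the edge set of K_{2r} can be partitioned into r + 1 parts, each spanning a star forest, such that: for each i with 1 ≤ i ≤ r, the i-th part is the union of the two vertex-disjoint stars {i j : i+1 ≤ j ≤ i+r−1} and {(r+i) j : r+i+1 ≤ j ≤ i−1} (indices modulo 2r), each with r − 1 edges, and within this part no two edges cross; and the (r+1)-st part consists of the r antipodal edges {i, i+r} for 0 ≤ i ≤ r−1. -/
/-- With `Fin n` placed in this circular order on a circle, `x` lies strictly
inside the open circular arc from `a` to `b` (going counterclockwise). -/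
def InOpenArc {n : ℕ} (a b x : Fin n) : Prop :=
  0 < (x - a).val ∧ (x - a).val < (b - a).val

/-- Two chords on the circle points `Fin n` *cross* iff they have four distinct
endpoints and exactly one endpoint of the second chord lies in the open
circular arc from one endpoint of the first chord to the other. -/
def Cross {n : ℕ} (e f : Sym2 (Fin n)) : Prop :=
  ∃ a b c d : Fin n, e = s(a, b) ∧ f = s(c, d) ∧
    a ≠ b ∧ c ≠ d ∧ a ≠ c ∧ a ≠ d ∧ b ≠ c ∧ b ≠ d ∧
    (InOpenArc a b c ↔ ¬ InOpenArc a b d)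

/-- The vertex antipodal to `i` on the circle `Fin (2r)`. -/
def antipode (r : ℕ) (i : Fin (2 * r)) : Fin (2 * r) :=
  ⟨(i.val + r) % (2 * r), Nat.mod_lt _ (Nat.lt_of_le_of_lt (Nat.zero_le _) i.isLt)⟩

/-- The `r` antipodal edges `{i, i+r}` of `K_{2r}`. -/
def antipodalEdges (r : ℕ) : Set (Sym2 (Fin (2 * r))) :=
  {e | ∃ i : Fin (2 * r), e = s(i, antipode r i)}

/-- The star centered at `i` whose leaves are the `r - 1` vertices
`i+1, …, i+(r-1)` (indices mod `2r`). -/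
def starAt (r : ℕ) (i : Fin (2 * r)) : Set (Sym2 (Fin (2 * r))) :=
  {e | ∃ j : Fin (2 * r), e = s(i, j) ∧ 1 ≤ (j - i).val ∧ (j - i).val ≤ r - 1}

/-- A set of edges is a *star* iff all its edges share a common endpoint. -/
def IsStarEdgeSet {V : Type*} (S : Set (Sym2 V)) : Prop :=
  ∃ c : V, ∀ e ∈ S, c ∈ e

/-- Two edge sets are *vertex-disjoint* iff no vertex lies in an edge of both. -/
def VertexDisjoint {V : Type*} (A B : Set (Sym2 V)) : Prop :=
  ∀ e ∈ A, ∀ f ∈ B, ∀ v : V, v ∈ e → v ∉ f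

/-! Write `d(a, b) = (b - a).val` for the distance from `a` forward to `b` on `Fin (2r)`.
An edge `{a, b}` with `d(a, b) = r` is antipodal; the antipodal edges form a perfect matching.
Otherwise exactly one of `d(a, b)`, `d(b, a)` lies in `[1, r - 1]`, so the edge lies in the star
centred at exactly one of its endpoints, and that centre lies in exactly one antipodal pair
`{i, i + r}` with `i < r`. Every vertex of the star at `c` is at distance at most `r - 1` from `c`,
every vertex of the star at `c + r` at distance at least `r`. Hence the two stars are
vertex-disjoint, so together a star forest, and no endpoint of an edge of one star lies strictly
inside the arc spanned by an edge of the other, so no two of their edges cross. -/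

namespace Fin

lemma val_sub_eq_or {n : ℕ} (a b : Fin n) :
    ((a - b).val = a.val - b.val ∧ b.val ≤ a.val) ∨
      ((a - b).val = n + a.val - b.val ∧ a.val < b.val) := by
  rcases le_or_gt b.val a.val with h | h
  · exact Or.inl ⟨sub_val_of_le h, h⟩
  · exact Or.inr ⟨coe_sub_iff_lt.2 h, h⟩

lemma val_sub_swap {n : ℕ} {a b : Fin n} (h : a ≠ b) : (a - b).val = n - (b - a).val := by
  have := val_ne_of_ne h
  rcases val_sub_eq_or a b with ⟨_, _⟩ | ⟨_, _⟩ <;>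
    rcases val_sub_eq_or b a with ⟨_, _⟩ | ⟨_, _⟩ <;> omega

lemma ncard_setOf_val_sub_mem {n : ℕ} (c : Fin n) {s : Set ℕ} (hs : s ⊆ Set.Iio n) :
    {j : Fin n | (j - c).val ∈ s}.ncard = s.ncard := by
  have := NeZero.of_pos c.pos
  change ((· - c) ⁻¹' (Fin.val ⁻¹' s)).ncard = _
  rw [Set.ncard_preimage_of_injective_subset_range sub_left_injective
      fun x _ => ⟨x + c, add_sub_cancel_right x c⟩,
    Set.ncard_preimage_of_injective_subset_range val_injective (range_val ▸ hs)]

end Fin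

section Crossing

variable {n : ℕ}

lemma inOpenArc_swap {p q x : Fin n} (hpq : p ≠ q) (hxp : x ≠ p) (hxq : x ≠ q) :
    InOpenArc q p x ↔ ¬ InOpenArc p q x := by
  have := Fin.val_ne_of_ne hpq
  have := Fin.val_ne_of_ne hxp
  have := Fin.val_ne_of_ne hxq
  unfold InOpenArc
  rcases Fin.val_sub_eq_or x p with ⟨_, _⟩ | ⟨_, _⟩ <;>
    rcases Fin.val_sub_eq_or x q with ⟨_, _⟩ | ⟨_, _⟩ <;>
    rcases Fin.val_sub_eq_or q p with ⟨_, _⟩ | ⟨_, _⟩ <;>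
    rcases Fin.val_sub_eq_or p q with ⟨_, _⟩ | ⟨_, _⟩ <;> omega

lemma Cross.ne_and_inOpenArc_iff {p q u v : Fin n} (h : Cross s(p, q) s(u, v)) :
    p ≠ u ∧ (InOpenArc p q u ↔ ¬ InOpenArc p q v) := by
  obtain ⟨a, b, c, d, hab, hcd, hne, -, hac, had, hbc, hbd, hiff⟩ := h
  rcases Sym2.eq_iff.1 hab with ⟨rfl, rfl⟩ | ⟨rfl, rfl⟩ <;>
    rcases Sym2.eq_iff.1 hcd with ⟨rfl, rfl⟩ | ⟨rfl, rfl⟩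
  · exact ⟨hac, hiff⟩
  · exact ⟨had, by tauto⟩
  · rw [inOpenArc_swap hne.symm hbc.symm hac.symm,
      inOpenArc_swap hne.symm hbd.symm had.symm] at hiff
    exact ⟨hbc, by tauto⟩
  · rw [inOpenArc_swap hne.symm hbc.symm hac.symm,
      inOpenArc_swap hne.symm hbd.symm had.symm] at hiff
    exact ⟨hbd, by tauto⟩

lemma not_cross_mk_mk_of_not_inOpenArc {p q u v : Fin n} (hu : ¬ InOpenArc p q u)
    (hv : ¬ InOpenArc p q v) : ¬ Cross s(p, q) s(u, v) := fun h => by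
  have := h.ne_and_inOpenArc_iff.2
  tauto

end Crossing

section StarForest

variable {V : Type*} {S T : Set (Sym2 V)}

lemma IsStarEdgeSet.eq_or_eq (hS : IsStarEdgeSet S) {a b c d : V} (hab : s(a, b) ∈ S)
    (hbc : s(b, c) ∈ S) (hcd : s(c, d) ∈ S) (hab' : a ≠ b) (hbc' : b ≠ c) :
    a = c ∨ b = d := by
  obtain ⟨o, ho⟩ := hS
  have h1 := Sym2.mem_iff.1 (ho _ hab)
  have h2 := Sym2.mem_iff.1 (ho _ hbc)
  have h3 := Sym2.mem_iff.1 (ho _ hcd)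
  rcases h1 with rfl | rfl
  · exact Or.inl (h2.resolve_left hab')
  · exact Or.inr (h3.resolve_left hbc')

lemma VertexDisjoint.mem_left_iff (hd : VertexDisjoint S T) {e f : Sym2 V} {v : V}
    (he : e ∈ S ∪ T) (hf : f ∈ S ∪ T) (hve : v ∈ e) (hvf : v ∈ f) :
    e ∈ S ↔ f ∈ S := by
  rcases he with he | he <;> rcases hf with hf | hf
  · exact iff_of_true he hf
  · exact absurd hvf (hd e he f hf v hve)
  · exact absurd hve (hd f hf e he v hvf)
  · exact iff_of_false (fun h => hd e h e he v hve hve) (fun h => hd f h f hf v hvf hvf)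

lemma isStarForest_union (hS : IsStarEdgeSet S) (hT : IsStarEdgeSet T)
    (hd : VertexDisjoint S T) :
    IsStarForest (SimpleGraph.fromEdgeSet (S ∪ T)) := by
  intro a b c d hab hbc hcd
  simp only [SimpleGraph.fromEdgeSet_adj] at hab hbc hcd
  have hb := hd.mem_left_iff hab.1 hbc.1 (Sym2.mem_mk_right a b) (Sym2.mem_mk_left b c)
  have hc := hd.mem_left_iff hbc.1 hcd.1 (Sym2.mem_mk_right b c) (Sym2.mem_mk_left c d)
  by_cases h : s(a, b) ∈ S
  · exact hS.eq_or_eq h (hb.1 h) (hc.1 (hb.1 h)) hab.2 hbc.2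
  · have hT' : ∀ e ∈ S ∪ T, e ∉ S → e ∈ T := fun e he h => he.resolve_left h
    exact hT.eq_or_eq (hT' _ hab.1 h) (hT' _ hbc.1 (mt hb.2 h))
      (hT' _ hcd.1 (mt hc.2 (mt hb.2 h))) hab.2 hbc.2

end StarForest

lemma Nat.le_two_mul_self (r : ℕ) : r ≤ 2 * r := by omega

section Antipode

variable {r : ℕ}

lemma val_antipode_eq_or (i : Fin (2 * r)) :
    (i.val < r ∧ (antipode r i).val = i.val + r) ∨
      (r ≤ i.val ∧ (antipode r i).val = i.val - r) := by
  rcases lt_or_ge i.val r with h | h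
  · exact Or.inl ⟨h, Nat.mod_eq_of_lt (by omega)⟩
  · refine Or.inr ⟨h, ?_⟩
    change (i.val + r) % (2 * r) = i.val - r
    rw [Nat.mod_eq_sub_mod (by omega), Nat.mod_eq_of_lt (by omega)]
    omega

lemma antipode_antipode (i : Fin (2 * r)) : antipode r (antipode r i) = i := by
  ext
  rcases val_antipode_eq_or i with ⟨_, _⟩ | ⟨_, _⟩ <;>
    rcases val_antipode_eq_or (antipode r i) with ⟨_, _⟩ | ⟨_, _⟩ <;> omega

lemma antipode_ne (i : Fin (2 * r)) : antipode r i ≠ i := by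
  rw [ne_eq, Fin.ext_iff]
  rcases val_antipode_eq_or i with ⟨_, _⟩ | ⟨_, _⟩ <;> omega

lemma val_sub_eq_iff_eq_antipode (a b : Fin (2 * r)) : (b - a).val = r ↔ b = antipode r a := by
  rw [Fin.ext_iff]
  rcases Fin.val_sub_eq_or b a with ⟨_, _⟩ | ⟨_, _⟩ <;>
    rcases val_antipode_eq_or a with ⟨_, _⟩ | ⟨_, _⟩ <;> omega

lemma val_sub_eq_val_sub_antipode_add {c v : Fin (2 * r)} (h : (v - antipode r c).val < r) :
    (v - c).val = (v - antipode r c).val + r := by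
  rcases Fin.val_sub_eq_or v c with ⟨_, _⟩ | ⟨_, _⟩ <;>
    rcases Fin.val_sub_eq_or v (antipode r c) with ⟨_, _⟩ | ⟨_, _⟩ <;>
    rcases val_antipode_eq_or c with ⟨_, _⟩ | ⟨_, _⟩ <;> omega

lemma existsUnique_castLE_eq_or_antipode_castLE_eq (v : Fin (2 * r)) :
    ∃! i : Fin r, i.castLE (Nat.le_two_mul_self r) = v ∨
      antipode r (i.castLE (Nat.le_two_mul_self r)) = v := by
  have hval : ∀ i : Fin r,
      (i.castLE (Nat.le_two_mul_self r) = v ∨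
          antipode r (i.castLE (Nat.le_two_mul_self r)) = v) ↔
        (i.val = v.val ∨ i.val + r = v.val) := by
    intro i
    have := val_antipode_eq_or (i.castLE (Nat.le_two_mul_self r))
    simp only [Fin.ext_iff, Fin.val_castLE] at this ⊢
    omega
  rcases lt_or_ge v.val r with h | h
  · exact ⟨⟨v.val, h⟩, (hval _).2 (Or.inl rfl),
      fun i hi => Fin.ext (by have := (hval i).1 hi; simp only; omega)⟩
  · exact ⟨⟨v.val - r, by omega⟩, (hval _).2 (Or.inr (by simp only; omega)),
      fun i hi => Fin.ext (by have := (hval i).1 hi; simp only; omega)⟩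

end Antipode

section AntipodalEdges

variable {r : ℕ}

lemma mk_mem_antipodalEdges_iff (a b : Fin (2 * r)) :
    s(a, b) ∈ antipodalEdges r ↔ b = antipode r a := by
  constructor
  · rintro ⟨i, hi⟩
    rcases Sym2.eq_iff.1 hi with ⟨rfl, rfl⟩ | ⟨rfl, rfl⟩
    · rfl
    · exact (antipode_antipode b).symm
  · rintro rfl
    exact ⟨a, rfl⟩

lemma antipodalEdges_subset_edgeSet :
    antipodalEdges r ⊆ (⊤ : SimpleGraph (Fin (2 * r))).edgeSet := by
  rintro _ ⟨i, rfl⟩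
  simpa using (antipode_ne i).symm

lemma isStarForest_antipodalEdges (r : ℕ) :
    IsStarForest (SimpleGraph.fromEdgeSet (antipodalEdges r)) := by
  intro a b c d hab hbc _
  rw [SimpleGraph.fromEdgeSet_adj, mk_mem_antipodalEdges_iff] at hab hbc
  rw [hbc.1, hab.1, antipode_antipode]
  exact Or.inl rfl

lemma antipodalEdges_eq_range (r : ℕ) :
    antipodalEdges r = Set.range fun i : Fin r =>
      s(i.castLE (Nat.le_two_mul_self r), antipode r (i.castLE (Nat.le_two_mul_self r))) := by
  ext e
  constructor
  · rintro ⟨c, rfl⟩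
    rcases val_antipode_eq_or c with ⟨h, -⟩ | ⟨h, hc⟩
    · exact ⟨⟨c, h⟩, rfl⟩
    · refine ⟨⟨(antipode r c).val, by omega⟩, ?_⟩
      change s(antipode r c, antipode r (antipode r c)) = _
      rw [antipode_antipode, Sym2.eq_swap]
  · rintro ⟨i, rfl⟩
    exact ⟨_, rfl⟩

lemma ncard_antipodalEdges (r : ℕ) : (antipodalEdges r).ncard = r := by
  rw [antipodalEdges_eq_range, Set.ncard_range_of_injective, Nat.card_eq_fintype_card,
    Fintype.card_fin]
  intro i j h
  rcases Sym2.eq_iff.1 h with ⟨h, -⟩ | ⟨h, -⟩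
  · exact Fin.castLE_injective _ h
  · have := val_antipode_eq_or (j.castLE (Nat.le_two_mul_self r))
    simp only [Fin.ext_iff, Fin.val_castLE] at h this
    omega

end AntipodalEdges

section Stars

variable {r : ℕ}

lemma mk_mem_starAt_iff (c a b : Fin (2 * r)) :
    s(a, b) ∈ starAt r c ↔
      (c = a ∧ 1 ≤ (b - a).val ∧ (b - a).val ≤ r - 1) ∨
        (c = b ∧ 1 ≤ (a - b).val ∧ (a - b).val ≤ r - 1) := by
  constructor
  · rintro ⟨j, hj, h⟩
    rcases Sym2.eq_iff.1 hj with ⟨rfl, rfl⟩ | ⟨rfl, rfl⟩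
    · exact Or.inl ⟨rfl, h⟩
    · exact Or.inr ⟨rfl, h⟩
  · rintro (⟨rfl, h⟩ | ⟨rfl, h⟩)
    · exact ⟨b, rfl, h⟩
    · exact ⟨a, Sym2.eq_swap, h⟩

lemma mk_mem_starAt_iff_of_short {a b : Fin (2 * r)} (h1 : 1 ≤ (b - a).val)
    (h2 : (b - a).val ≤ r - 1) (c : Fin (2 * r)) : s(a, b) ∈ starAt r c ↔ c = a := by
  have : r - 1 < (a - b).val := by
    rcases Fin.val_sub_eq_or a b with ⟨_, _⟩ | ⟨_, _⟩ <;>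
      rcases Fin.val_sub_eq_or b a with ⟨_, _⟩ | ⟨_, _⟩ <;> omega
  rw [mk_mem_starAt_iff]
  omega

lemma mk_notMem_starAt_of_antipodal {a b : Fin (2 * r)} (h : (b - a).val = r)
    (c : Fin (2 * r)) : s(a, b) ∉ starAt r c := by
  have : (a - b).val = r := by
    rcases Fin.val_sub_eq_or a b with ⟨_, _⟩ | ⟨_, _⟩ <;>
      rcases Fin.val_sub_eq_or b a with ⟨_, _⟩ | ⟨_, _⟩ <;> omega
  rw [mk_mem_starAt_iff]
  omega

lemma starAt_subset_edgeSet (c : Fin (2 * r)) :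
    starAt r c ⊆ (⊤ : SimpleGraph (Fin (2 * r))).edgeSet := by
  rintro _ ⟨j, rfl, hj, -⟩
  rintro (hd : s(c, j).IsDiag)
  rw [Sym2.mk_isDiag_iff] at hd
  subst hd
  rcases Fin.val_sub_eq_or c c with ⟨_, _⟩ | ⟨_, _⟩ <;> omega

lemma starAt_eq_image (c : Fin (2 * r)) :
    starAt r c = (s(c, ·)) '' {j | (j - c).val ∈ Set.Icc 1 (r - 1)} := by
  ext e
  simp only [starAt, Set.mem_ofPred_eq, Set.mem_image, Set.mem_Icc]
  exact exists_congr fun j => by rw [eq_comm, and_comm]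

lemma ncard_starAt (c : Fin (2 * r)) : (starAt r c).ncard = r - 1 := by
  rw [starAt_eq_image, Set.ncard_image_of_injective _ fun _ _ => Sym2.congr_right.1,
    Fin.ncard_setOf_val_sub_mem c fun k hk => by
      simp only [Set.mem_Icc, Set.mem_Iio] at hk ⊢; omega,
    Set.ncard_Icc_nat]
  omega

lemma isStarEdgeSet_starAt (c : Fin (2 * r)) : IsStarEdgeSet (starAt r c) :=
  ⟨c, by rintro _ ⟨j, rfl, -⟩; exact Sym2.mem_mk_left c j⟩

lemma val_sub_le_of_mem_starAt {c v : Fin (2 * r)} {e : Sym2 (Fin (2 * r))}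
    (he : e ∈ starAt r c) (hv : v ∈ e) : (v - c).val ≤ r - 1 := by
  obtain ⟨j, rfl, -, hj⟩ := he
  rcases Sym2.mem_iff.1 hv with rfl | rfl
  · rcases Fin.val_sub_eq_or v v with ⟨_, _⟩ | ⟨_, _⟩ <;> omega
  · exact hj

lemma vertexDisjoint_starAt_antipode (c : Fin (2 * r)) :
    VertexDisjoint (starAt r c) (starAt r (antipode r c)) := by
  intro e he f hf v hve hvf
  have h1 := val_sub_le_of_mem_starAt he hve
  have h2 := val_sub_le_of_mem_starAt hf hvf
  have := val_sub_eq_val_sub_antipode_add (c := c) (v := v) (by omega)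
  omega

lemma not_cross_of_mem_starAt {c : Fin (2 * r)} {e f : Sym2 (Fin (2 * r))}
    (he : e ∈ starAt r c) (hf : f ∈ starAt r c) : ¬ Cross e f := by
  obtain ⟨j, rfl, -⟩ := he
  obtain ⟨j', rfl, -⟩ := hf
  exact fun h => h.ne_and_inOpenArc_iff.1 rfl

lemma not_cross_of_mem_starAt_of_mem_starAt_antipode {c : Fin (2 * r)}
    {e f : Sym2 (Fin (2 * r))} (he : e ∈ starAt r c) (hf : f ∈ starAt r (antipode r c)) :
    ¬ Cross e f := by
  obtain ⟨j, rfl, -, hj⟩ := he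
  obtain ⟨j', rfl, -, hj'⟩ := hf
  have := (val_sub_eq_iff_eq_antipode c (antipode r c)).2 rfl
  have := val_sub_eq_val_sub_antipode_add (c := c) (v := j') (by omega)
  apply not_cross_mk_mk_of_not_inOpenArc <;> unfold InOpenArc <;> omega

end Stars

section Pages

variable {r : ℕ}

def starPair (r : ℕ) (c : Fin (2 * r)) : Set (Sym2 (Fin (2 * r))) :=
  starAt r c ∪ starAt r (antipode r c)

lemma isStarForest_starPair (c : Fin (2 * r)) :
    IsStarForest (SimpleGraph.fromEdgeSet (starPair r c)) :=
  isStarForest_union (isStarEdgeSet_starAt c) (isStarEdgeSet_starAt _)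
    (vertexDisjoint_starAt_antipode c)

lemma not_cross_of_mem_starPair {c : Fin (2 * r)} {e f : Sym2 (Fin (2 * r))}
    (he : e ∈ starPair r c) (hf : f ∈ starPair r c) : ¬ Cross e f := by
  rcases he with he | he <;> rcases hf with hf | hf
  · exact not_cross_of_mem_starAt he hf
  · exact not_cross_of_mem_starAt_of_mem_starAt_antipode he hf
  · rw [← antipode_antipode c] at hf
    exact not_cross_of_mem_starAt_of_mem_starAt_antipode he hf
  · exact not_cross_of_mem_starAt he hf

lemma mk_mem_starPair_iff_of_short {a b : Fin (2 * r)} (h1 : 1 ≤ (b - a).val)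
    (h2 : (b - a).val ≤ r - 1) (c : Fin (2 * r)) :
    s(a, b) ∈ starPair r c ↔ c = a ∨ antipode r c = a := by
  rw [starPair, Set.mem_union, mk_mem_starAt_iff_of_short h1 h2,
    mk_mem_starAt_iff_of_short h1 h2]

def bookPage (r : ℕ) : Fin (r + 1) → Set (Sym2 (Fin (2 * r))) :=
  Fin.lastCases (antipodalEdges r) fun i => starPair r (i.castLE (Nat.le_two_mul_self r))

@[simp]
lemma bookPage_castSucc (i : Fin r) :
    bookPage r i.castSucc = starPair r (i.castLE (Nat.le_two_mul_self r)) :=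
  Fin.lastCases_castSucc i

@[simp]
lemma bookPage_last : bookPage r (Fin.last r) = antipodalEdges r :=
  Fin.lastCases_last

lemma bookPage_subset_edgeSet (i : Fin (r + 1)) :
    bookPage r i ⊆ (⊤ : SimpleGraph (Fin (2 * r))).edgeSet := by
  induction i using Fin.lastCases with
  | last => exact bookPage_last ▸ antipodalEdges_subset_edgeSet
  | cast i =>
    rw [bookPage_castSucc]
    exact Set.union_subset (starAt_subset_edgeSet _) (starAt_subset_edgeSet _)

lemma isStarForest_bookPage (i : Fin (r + 1)) :
    IsStarForest (SimpleGraph.fromEdgeSet (bookPage r i)) := by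
  induction i using Fin.lastCases with
  | last => exact bookPage_last ▸ isStarForest_antipodalEdges r
  | cast i => exact bookPage_castSucc i ▸ isStarForest_starPair _

lemma existsUnique_mem_bookPage_of_short {a b : Fin (2 * r)} (h1 : 1 ≤ (b - a).val)
    (h2 : (b - a).val < r) : ∃! i, s(a, b) ∈ bookPage r i := by
  obtain ⟨k, hk, huniq⟩ := existsUnique_castLE_eq_or_antipode_castLE_eq a
  refine ⟨k.castSucc, ?_, fun i hi => ?_⟩
  · beta_reduce
    rwa [bookPage_castSucc, mk_mem_starPair_iff_of_short h1 (by omega)]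
  induction i using Fin.lastCases with
  | last =>
    rw [bookPage_last, mk_mem_antipodalEdges_iff, ← val_sub_eq_iff_eq_antipode] at hi
    omega
  | cast j =>
    rw [bookPage_castSucc, mk_mem_starPair_iff_of_short h1 (by omega)] at hi
    rw [huniq j hi]

lemma existsUnique_mem_bookPage_of_antipodal {a b : Fin (2 * r)} (h : (b - a).val = r) :
    ∃! i, s(a, b) ∈ bookPage r i := by
  refine ⟨Fin.last r, by beta_reduce; rwa [bookPage_last, mk_mem_antipodalEdges_iff,
    ← val_sub_eq_iff_eq_antipode], fun i hi => ?_⟩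
  induction i using Fin.lastCases with
  | last => rfl
  | cast j =>
    rw [bookPage_castSucc] at hi
    exact (hi.elim (mk_notMem_starAt_of_antipodal h _) (mk_notMem_starAt_of_antipodal h _)).elim

lemma existsUnique_mem_bookPage {e : Sym2 (Fin (2 * r))}
    (he : e ∈ (⊤ : SimpleGraph (Fin (2 * r))).edgeSet) : ∃! i, e ∈ bookPage r i := by
  induction e using Sym2.ind with
  | _ a b =>
    rw [SimpleGraph.mem_edgeSet, SimpleGraph.top_adj] at he
    wlog hle : (b - a).val ≤ r generalizing a b
    · rw [Sym2.eq_swap]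
      exact this b a he.symm (by rw [Fin.val_sub_swap he]; omega)
    have : (b - a).val ≠ 0 := by
      have := Fin.val_ne_of_ne he
      rcases Fin.val_sub_eq_or b a with ⟨_, _⟩ | ⟨_, _⟩ <;> omega
    rcases hle.lt_or_eq with hlt | heq
    · exact existsUnique_mem_bookPage_of_short (by omega) hlt
    · exact existsUnique_mem_bookPage_of_antipodal heq

end Pages

/-- Let `r ≥ 2` and put the vertices of `K_{2r}` as `Fin (2r)`
in this circular order on a circle.  The edge set of `K_{2r}` can be
partitioned into `r + 1` parts, all spanning star forests, such that: for each
`i` with `0 ≤ i ≤ r − 1`, the `i`-th part is the union of the two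
vertex-disjoint stars `{i j : i+1 ≤ j ≤ i+r−1}` and
`{(r+i) j : r+i+1 ≤ j ≤ i−1}` (indices modulo `2r`), each with `r − 1` edges,
and within this part no two edges cross; and the `(r+1)`-st part consists of
the `r` antipodal edges `{i, i+r}`. -/
theorem relaxed_star_forest_book_embedding_K2r (r : ℕ) :
    ∃ P : Fin (r + 1) → Set (Sym2 (Fin (2 * r))),
      (∀ i, P i ⊆ (⊤ : SimpleGraph (Fin (2 * r))).edgeSet) ∧
      (∀ e ∈ (⊤ : SimpleGraph (Fin (2 * r))).edgeSet, ∃! i, e ∈ P i) ∧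
      (∀ i, IsStarForest (SimpleGraph.fromEdgeSet (P i))) ∧
      (∀ i : Fin r,
        P i.castSucc =
            starAt r (i.castLE (by omega)) ∪
              starAt r (antipode r (i.castLE (by omega))) ∧
          VertexDisjoint (starAt r (i.castLE (by omega)))
            (starAt r (antipode r (i.castLE (by omega)))) ∧
          (starAt r (i.castLE (by omega))).ncard = r - 1 ∧
          (starAt r (antipode r (i.castLE (by omega)))).ncard = r - 1 ∧
          (∀ e ∈ P i.castSucc, ∀ f ∈ P i.castSucc, ¬ Cross e f)) ∧
      P (Fin.last r) = antipodalEdges r ∧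
      (antipodalEdges r).ncard = r := by
  refine ⟨bookPage r, bookPage_subset_edgeSet, fun e he => existsUnique_mem_bookPage he,
    isStarForest_bookPage, fun i => ⟨bookPage_castSucc i, vertexDisjoint_starAt_antipode _,
      ncard_starAt _, ncard_starAt _, fun e he f hf => ?_⟩, bookPage_last,
    ncard_antipodalEdges r⟩
  rw [bookPage_castSucc] at he hf
  exact not_cross_of_mem_starPair he hf
end

section
/- Let G be a simple graph on n ≥ 4 vertices identified with Fin n, placed in this circular order on a circle. If the edge set of G is partitioned into k parts such that within every part no two edges cross, then k ≥ (|E(G)| − n) / (n − 3); equivalently, k(n − 3) ≥ |E(G)| − n. -/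
lemma card_le_erase {α : Type*} [DecidableEq α] (s : Finset α) (x : α) :
    s.card ≤ (s.erase x).card + 1 := by
  by_cases h : x ∈ s
  · rw [Finset.card_erase_add_one h]
  · rw [Finset.erase_eq_of_notMem h]; omega

/-- core counting lemma -/
lemma noncross_card (N : ℕ) : ∀ l r : ℕ, r - l ≤ N →
    ∀ S : Finset (ℕ × ℕ),
    (∀ p ∈ S, l ≤ p.1 ∧ p.1 + 2 ≤ p.2 ∧ p.2 ≤ r ∧ p ≠ (l, r)) →
    (∀ p ∈ S, ∀ q ∈ S, ¬(p.1 < q.1 ∧ q.1 < p.2 ∧ p.2 < q.2)) →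
    S.card ≤ r - l - 2 := by
  induction N with
  | zero =>
    intro l r hr S hS _
    rcases S.eq_empty_or_nonempty with h | ⟨p, hp⟩
    · simp [h]
    · have := hS p hp; omega
  | succ N ih =>
    intro l r hr S hS hnc
    rcases S.eq_empty_or_nonempty with h | hne
    · simp [h]
    obtain ⟨⟨a, b⟩, hp, hmax⟩ := S.exists_max_image (fun q => q.2 - q.1) hne
    obtain ⟨hla, hab, hbr, hne'⟩ := hS _ hp
    simp only at hla hab hbr
    have hlr : a ≠ l ∨ b ≠ r := by
      by_contra hc; push_neg at hc
      exact hne' (Prod.ext hc.1 hc.2)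
    -- classification of other elements
    have hclass : ∀ q ∈ S.erase (a, b),
        (a ≤ q.1 ∧ q.2 ≤ b) ∨ (q.2 ≤ a) ∨ (b ≤ q.1) := by
      intro q hq
      have hqS := Finset.mem_of_mem_erase hq
      have hqne := Finset.ne_of_mem_erase hq
      have h1 : ¬(a < q.1 ∧ q.1 < b ∧ b < q.2) := hnc _ hp _ hqS
      have h2 : ¬(q.1 < a ∧ a < q.2 ∧ q.2 < b) := hnc _ hqS _ hp
      have h3 : q.2 - q.1 ≤ b - a := hmax _ hqS
      have h4 := hS _ hqS
      have hne2 : q.1 ≠ a ∨ q.2 ≠ b := by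
        by_contra hc; push_neg at hc
        exact hqne (Prod.ext hc.1 hc.2)
      rcases hne2 with h | h <;> omega
    classical
    set E := S.erase (a, b) with hE
    set Sin := E.filter (fun q => a ≤ q.1 ∧ q.2 ≤ b) with hSin
    set Sout := E.filter (fun q => ¬(a ≤ q.1 ∧ q.2 ≤ b)) with hSout
    set Sl := Sout.filter (fun q => q.2 ≤ a) with hSl
    set Sr := Sout.filter (fun q => ¬ q.2 ≤ a) with hSr
    have hsplit : S.card ≤ 1 + (Sin.card + (Sl.card + Sr.card)) := by
      have h1 : Sin.card + Sout.card = E.card :=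
        Finset.card_filter_add_card_filter_not _
      have h1' : Sl.card + Sr.card = Sout.card :=
        Finset.card_filter_add_card_filter_not _
      have h2 := card_le_erase S (a, b)
      rw [← hE] at h2
      omega
    have hin : Sin.card ≤ b - a - 2 := by
      apply ih a b (by omega)
      · intro q hq
        rw [hSin, Finset.mem_filter] at hq
        have h4 := hS _ (Finset.mem_of_mem_erase hq.1)
        have h5 := Finset.ne_of_mem_erase hq.1
        exact ⟨hq.2.1, h4.2.1, hq.2.2, h5⟩
      · intro p hp' q hq'
        rw [hSin, Finset.mem_filter] at hp' hq'
        exact hnc _ (Finset.mem_of_mem_erase hp'.1) _ (Finset.mem_of_mem_erase hq'.1)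
    have memS : ∀ q ∈ Sout, q ∈ S := by
      intro q hq
      rw [hSout, Finset.mem_filter] at hq
      exact Finset.mem_of_mem_erase hq.1
    have hl : Sl.card ≤ a - l - 1 := by
      rcases le_or_gt (l + 2) a with hcase | hcase
      · have key : (Sl.erase (l,a)).card ≤ a - l - 2 := by
          apply ih l a (by omega)
          · intro q hq
            have hq2 := Finset.mem_of_mem_erase hq
            rw [hSl, Finset.mem_filter] at hq2
            have h4 := hS _ (memS _ hq2.1)
            exact ⟨h4.1, h4.2.1, hq2.2, Finset.ne_of_mem_erase hq⟩
          · intro p hp' q hq'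
            have hp2 := Finset.mem_of_mem_erase hp'
            have hq2 := Finset.mem_of_mem_erase hq'
            rw [hSl, Finset.mem_filter] at hp2 hq2
            exact hnc _ (memS _ hp2.1) _ (memS _ hq2.1)
        have h6 := card_le_erase Sl (l, a)
        omega
      · have : Sl = ∅ := by
          rw [Finset.eq_empty_iff_forall_notMem]
          intro q hq
          rw [hSl, Finset.mem_filter] at hq
          have h4 := hS _ (memS _ hq.1)
          have h5 := hq.2
          omega
        simp [this]
    have hr' : Sr.card ≤ r - b - 1 := by
      have hmem : ∀ q ∈ Sr, b ≤ q.1 := by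
        intro q hq
        rw [hSr, Finset.mem_filter] at hq
        have hq3 := hq.1
        rw [hSout, Finset.mem_filter] at hq3
        have := hclass _ hq3.1
        have h3 := hq3.2
        have h4 := hq.2
        omega
      rcases le_or_gt (b + 2) r with hcase | hcase
      · have key : (Sr.erase (b,r)).card ≤ r - b - 2 := by
          apply ih b r (by omega)
          · intro q hq
            have hq2 := Finset.mem_of_mem_erase hq
            have h4 := hS _ (memS _ (by rw [hSr, Finset.mem_filter] at hq2; exact hq2.1))
            exact ⟨hmem _ hq2, h4.2.1, h4.2.2.1, Finset.ne_of_mem_erase hq⟩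
          · intro p hp' q hq'
            have hp2 := Finset.mem_of_mem_erase hp'
            have hq2 := Finset.mem_of_mem_erase hq'
            rw [hSr, Finset.mem_filter] at hp2 hq2
            exact hnc _ (memS _ hp2.1) _ (memS _ hq2.1)
        have h6 := card_le_erase Sr (b, r)
        omega
      · have : Sr = ∅ := by
          rw [Finset.eq_empty_iff_forall_notMem]
          intro q hq
          have h5 := hmem _ hq
          rw [hSr, Finset.mem_filter] at hq
          have h4 := hS _ (memS _ hq.1)
          omega
        simp [this]
    omega


lemma sub_val' {n : ℕ} (a x : Fin n) :
    (x - a).val = if a.val ≤ x.val then x.val - a.val else n + x.val - a.val := by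
  have ha := a.isLt
  have hx := x.isLt
  rw [Fin.sub_def]
  simp only
  split_ifs with h
  · have he : n - a.val + x.val = (x.val - a.val) + n := by omega
    rw [he, Nat.add_mod_right, Nat.mod_eq_of_lt (by omega)]
  · rw [Nat.mod_eq_of_lt (by omega)]
    omega

lemma arc_iff {n : ℕ} (a b x : Fin n) (hab : a.val < b.val) :
    InOpenArc a b x ↔ (a.val < x.val ∧ x.val < b.val) := by
  have ha := a.isLt
  have hx := x.isLt
  have hb := b.isLt
  unfold InOpenArc
  rw [sub_val', sub_val']
  split_ifs <;> omega

lemma cross_of {n : ℕ} (a b c d : Fin n)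
    (h1 : a.val < c.val) (h2 : c.val < b.val) (h3 : b.val < d.val) :
    Cross s(a, b) s(c, d) := by
  refine ⟨a, b, c, d, rfl, rfl, ?_, ?_, ?_, ?_, ?_, ?_, ?_⟩
  · exact fun h => by have := congrArg Fin.val h; omega
  · exact fun h => by have := congrArg Fin.val h; omega
  · exact fun h => by have := congrArg Fin.val h; omega
  · exact fun h => by have := congrArg Fin.val h; omega
  · exact fun h => by have := congrArg Fin.val h; omega
  · exact fun h => by have := congrArg Fin.val h; omega
  · rw [arc_iff a b c (by omega), arc_iff a b d (by omega)]
    constructor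
    · intro _ h; omega
    · intro _; omega

noncomputable def toPair {n : ℕ} : Sym2 (Fin n) → ℕ × ℕ :=
  Sym2.lift ⟨fun u v => (min u.val v.val, max u.val v.val), by
    intro u v; simp [min_comm, max_comm]⟩

lemma toPair_inj {n : ℕ} : Function.Injective (toPair (n := n)) := by
  intro e f
  induction e using Sym2.ind with | _ u v => ?_
  induction f using Sym2.ind with | _ u' v' => ?_
  simp only [toPair, Sym2.lift_mk, Prod.mk.injEq]
  intro h
  have hval : (u.val = u'.val ∧ v.val = v'.val) ∨ (u.val = v'.val ∧ v.val = u'.val) := by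
    omega
  rcases hval with ⟨h1, h2⟩ | ⟨h1, h2⟩
  · rw [Fin.ext h1, Fin.ext h2]
  · rw [Fin.ext h1, Fin.ext h2, Sym2.eq_swap]

lemma toPair_repr {n : ℕ} (e : Sym2 (Fin n)) (hd : ¬ e.IsDiag) :
    ∃ u v : Fin n, e = s(u, v) ∧ u.val < v.val ∧ toPair e = (u.val, v.val) := by
  induction e using Sym2.ind with | _ x y => ?_
  rw [Sym2.mk_isDiag_iff] at hd
  have hxy : x.val ≠ y.val := fun h => hd (Fin.ext h)
  rcases lt_or_gt_of_ne hxy with h | h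
  · exact ⟨x, y, rfl, h, by simp only [toPair, Sym2.lift_mk, Prod.mk.injEq]; omega⟩
  · refine ⟨y, x, Sym2.eq_swap, h, ?_⟩
    simp only [toPair, Sym2.lift_mk, Prod.mk.injEq]; omega

/-- Let `G` be a simple graph on `n ≥ 4` vertices identified
with `Fin n`, placed in this circular order on a circle.  If the edge set of
`G` is partitioned into `k` parts such that within every part no two edges
cross, then `k(n − 3) ≥ |E(G)| − n` (equivalently `k ≥ (|E(G)| − n)/(n − 3)`). -/
theorem book_thickness_lower_bound (n k : ℕ) (hn : 4 ≤ n)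
    (G : SimpleGraph (Fin n))
    (P : Fin k → Set (Sym2 (Fin n)))
    (hsub : ∀ i, P i ⊆ G.edgeSet)
    (hpart : ∀ e ∈ G.edgeSet, ∃! i, e ∈ P i)
    (hnc : ∀ i, ∀ e ∈ P i, ∀ f ∈ P i, ¬ Cross e f) :
    G.edgeSet.ncard - n ≤ k * (n - 3) := by
  classical
  set F := G.edgeSet.toFinset with hF
  have hncard : G.edgeSet.ncard = F.card := by rw [hF, Set.ncard_eq_toFinset_card']
  set hull : Sym2 (Fin n) → Prop :=
    fun e => (toPair e).2 = (toPair e).1 + 1 ∨ ((toPair e).1 = 0 ∧ (toPair e).2 = n - 1)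
    with hhull
  set H := F.filter hull with hHdef
  set D := F.filter (fun e => ¬ hull e) with hDdef
  have hsplitF : H.card + D.card = F.card :=
    Finset.card_filter_add_card_filter_not _
  have hedge : ∀ e ∈ F, ∃ u v : Fin n,
      e = s(u, v) ∧ u.val < v.val ∧ v.val ≤ n - 1 ∧ toPair e = (u.val, v.val) := by
    intro e he
    rw [hF, Set.mem_toFinset] at he
    have hd := G.not_isDiag_of_mem_edgeSet he
    obtain ⟨u, v, h1, h2, h3⟩ := toPair_repr e hd
    exact ⟨u, v, h1, h2, by have := v.isLt; omega, h3⟩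
  have hH : H.card ≤ n := by
    have himg : H.image toPair ⊆
        insert (0, n - 1) ((Finset.range (n - 1)).image (fun i => (i, i + 1))) := by
      intro p hp
      simp only [Finset.mem_image] at hp
      obtain ⟨e, he, hpe⟩ := hp
      rw [hHdef, Finset.mem_filter] at he
      obtain ⟨u, v, _, h2, h3, h4⟩ := hedge e he.1
      have hh := he.2
      rw [hhull] at hh
      simp only [h4] at hh
      rcases hh with hh | hh
      · apply Finset.mem_insert_of_mem
        simp only [Finset.mem_image, Finset.mem_range]
        exact ⟨u.val, by omega, by rw [← hpe, h4]; simp [hh]⟩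
      · apply Finset.mem_insert.2
        left
        rw [← hpe, h4]
        simp [hh.1, hh.2]
    have hcard := Finset.card_le_card himg
    have h5 : (H.image toPair).card = H.card :=
      Finset.card_image_of_injective H toPair_inj
    have h6 := Finset.card_insert_le (0, n - 1)
      ((Finset.range (n - 1)).image (fun i => (i, i + 1)))
    have h7 := Finset.card_image_le
      (s := Finset.range (n - 1)) (f := fun i => (i, i + 1))
    rw [Finset.card_range] at h7
    omega
  have hpage : ∀ i : Fin k, (D.filter (· ∈ P i)).card ≤ n - 3 := by
    intro i
    have hcardT : ((D.filter (· ∈ P i)).image toPair).card = (D.filter (· ∈ P i)).card :=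
      Finset.card_image_of_injective _ toPair_inj
    have hT := noncross_card (n - 1) 0 (n - 1) (by omega)
      ((D.filter (· ∈ P i)).image toPair) ?_ ?_
    · rw [hcardT] at hT; omega
    · intro p hp
      simp only [Finset.mem_image, Finset.mem_filter] at hp
      obtain ⟨e, ⟨heD, _⟩, hpe⟩ := hp
      rw [hDdef, Finset.mem_filter] at heD
      obtain ⟨u, v, _, h2, h3, h4⟩ := hedge e heD.1
      have hh := heD.2
      rw [hhull] at hh
      simp only [h4] at hh
      push_neg at hh
      rw [← hpe, h4]
      refine ⟨by omega, by omega, by omega, ?_⟩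
      simp only [ne_eq, Prod.mk.injEq, not_and]
      intro hu; exact fun hv => (hh.2 hu) hv
    · intro p hp q hq hcross
      simp only [Finset.mem_image, Finset.mem_filter] at hp hq
      obtain ⟨e, ⟨heD, heP⟩, hpe⟩ := hp
      obtain ⟨f, ⟨hfD, hfP⟩, hqe⟩ := hq
      rw [hDdef, Finset.mem_filter] at heD hfD
      obtain ⟨u, v, he1, he2, _, he4⟩ := hedge e heD.1
      obtain ⟨u', v', hf1, hf2, _, hf4⟩ := hedge f hfD.1
      apply hnc i e heP f hfP
      rw [he1, hf1]
      rw [← hpe, he4] at hcross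
      rw [← hqe, hf4] at hcross
      simp only at hcross
      exact cross_of u v u' v' hcross.1 hcross.2.1 hcross.2.2
  have hD : D.card ≤ k * (n - 3) := by
    have hsub2 : D ⊆ Finset.univ.biUnion (fun i : Fin k => D.filter (· ∈ P i)) := by
      intro e he
      have heF : e ∈ G.edgeSet := by
        rw [hDdef, Finset.mem_filter, hF, Set.mem_toFinset] at he
        exact he.1
      obtain ⟨i, hi, _⟩ := hpart e heF
      exact Finset.mem_biUnion.2 ⟨i, Finset.mem_univ _, Finset.mem_filter.2 ⟨he, hi⟩⟩
    calc D.card ≤ (Finset.univ.biUnion (fun i : Fin k => D.filter (· ∈ P i))).card :=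
          Finset.card_le_card hsub2
      _ ≤ ∑ i, (D.filter (· ∈ P i)).card := Finset.card_biUnion_le
      _ ≤ ∑ _i : Fin k, (n - 3) := Finset.sum_le_sum (fun i _ => hpage i)
      _ = k * (n - 3) := by simp [Finset.sum_const, mul_comm]
  omega
end
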